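/- arXiv:2409.00711 — 4 statements merged into one kernel-verified Lean document; each statement's English description precedes it below -/
import Mathlib

section
/- The vacuum expectation value of a product of an even number N of fermionic fields equals 2^{-N/2} Π_{i<j} (p_i - p_j)/(p_i + p_j), and it vanishes if N is odd. -/
/-!
Expand the Pfaffian along its first row and argue by induction. Deleting the parameter `x_j`
from the product `∏_{i<k} (x_i - x_k)/(x_i + x_k)` divides it by
`(-1)^j ∏_{i≠j} (x_j - x_i)/(x_j + x_i)`, so the inductive step is the identity
`∑_j (t - x_j)/(t + x_j) w_j = ∏_j (t - x_j)/(t + x_j)` with `t = x_0`, the `x_j` the remaining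
(oddly many) parameters and `w_j = ∏_{i≠j} (x_j + x_i)/(x_j - x_i)`. It comes from the partial
fraction expansion `∏_k (t - x_k)/(t + x_k) = 1 - 2 ∑_j x_j w_j/(t + x_j)`: at `t = 0` the left
side is `(-1)^odd = -1`, whence `∑_j w_j = 1`.
-/

open Finset Polynomial

/-- The Pfaffian of an `N × N` matrix, via the Laplace-type expansion along the first row.
For odd `N` it is `0`, matching the convention that only even-sized skew-symmetric matrices
have a (possibly nonzero) Pfaffian. -/
noncomputable def pf (R : Type*) [CommRing R] : (N : ℕ) → Matrix (Fin N) (Fin N) R → R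
  | 0, _ => 1
  | 1, _ => 0
  | (N+2), A => ∑ j : Fin (N+1), (-1 : R)^(j:ℕ) * A 0 j.succ *
      pf R N (fun a b => A ((j.succAbove a).succ) ((j.succAbove b).succ))

lemma pf_add_two {R : Type*} [CommRing R] (N : ℕ) (A : Matrix (Fin (N + 2)) (Fin (N + 2)) R) :
    pf R (N + 2) A = ∑ j : Fin (N + 1), (-1) ^ (j : ℕ) * A 0 j.succ *
      pf R N (A.submatrix (Fin.succ ∘ j.succAbove) (Fin.succ ∘ j.succAbove)) :=
  rfl

lemma pf_smul {R : Type*} [CommRing R] (c : R) :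
    ∀ (N : ℕ) (A : Matrix (Fin N) (Fin N) R), pf R N (c • A) = c ^ (N / 2) * pf R N A
  | 0, _ => by simp [pf]
  | 1, _ => by simp [pf]
  | N + 2, A => by
    rw [pf_add_two, pf_add_two, mul_sum, Nat.add_div_right N two_pos, pow_succ]
    refine sum_congr rfl fun j _ => ?_
    rw [Matrix.smul_apply, Matrix.submatrix_smul, Pi.smul_apply, Pi.smul_apply, pf_smul c N,
      smul_eq_mul]
    ring

lemma Fin.prod_prod_Ioi_eq_succAbove {M : Type*} [CommMonoid M] {m : ℕ}
    (G : Fin (m + 1) → Fin (m + 1) → M) (j : Fin (m + 1)) :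
    ∏ i, ∏ k ∈ Ioi i, G i k =
      (∏ a, ∏ b ∈ Ioi a, G (j.succAbove a) (j.succAbove b)) *
        ((∏ i ∈ Iio j, G i j) * ∏ k ∈ Ioi j, G j k) := by
  have hIoi : ∀ {n} (f : Fin n → M) (i : Fin n),
      ∏ k ∈ Ioi i, f k = ∏ k, if i < k then f k else 1 := fun f i => by
    rw [← filter_lt_eq_Ioi, prod_filter]
  have hIio : ∏ i ∈ Iio j, G i j = ∏ i, if i < j then G i j else 1 := by
    rw [← filter_gt_eq_Iio, prod_filter]
  simp only [hIoi, hIio]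
  rw [Fin.prod_univ_succAbove _ j, Fin.prod_univ_succAbove (fun i => if i < j then _ else _) j]
  simp only [Fin.prod_univ_succAbove (fun k => if j.succAbove _ < k then _ else _) j,
    Fin.succAbove_lt_succAbove_iff, lt_irrefl, if_false, one_mul, prod_mul_distrib]
  ac_rfl

lemma Fin.prod_Iio_mul_prod_Ioi_of_antisymm {R : Type*} [CommRing R] {m : ℕ}
    (G : Fin m → Fin m → R) (hG : ∀ i k, G i k = -G k i) (j : Fin m) :
    (∏ i ∈ Iio j, G i j) * ∏ k ∈ Ioi j, G j k =
      (-1) ^ (j : ℕ) * ∏ i ∈ univ.erase j, G j i := by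
  have hIio : ∏ i ∈ Iio j, G i j = (-1) ^ (j : ℕ) * ∏ i ∈ Iio j, G j i := by
    rw [← Fin.card_Iio j, ← Finset.prod_const, ← prod_mul_distrib]
    exact prod_congr rfl fun i _ => by rw [hG, neg_one_mul]
  rw [← compl_singleton, ← Ioi_disjUnion_Iio, prod_disjUnion, hIio]
  ring

section

variable {F : Type*} [Field F] {ι : Type*} [Fintype ι] [DecidableEq ι]

noncomputable def schurWeight (x : ι → F) (i : ι) : F :=
  ∏ j ∈ univ.erase i, (x i + x j) / (x i - x j)

lemma nodalWeight_neg_mul_prod (x : ι → F) (i : ι) :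
    Lagrange.nodalWeight univ (-x) i * ∏ k, (-x i - x k) = -(2 * x i * schurWeight x i) := by
  rw [← mul_prod_erase univ _ (mem_univ i), Lagrange.nodalWeight, schurWeight, mul_left_comm,
    ← prod_mul_distrib]
  have h : ∀ j, (-x i - -x j)⁻¹ * (-x i - x j) = (x i + x j) / (x i - x j) := fun j => by
    rw [show -x i - -x j = -(x i - x j) by ring, show -x i - x j = -(x i + x j) by ring,
      inv_neg, neg_mul_neg, div_eq_inv_mul]
  simp only [Pi.neg_apply, h]
  ring

/-- Lagrange interpolation of `∏ (X - x k) - ∏ (X + x k)`, of degree `< #ι`, at the nodes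
`-x k`. -/
lemma prod_sub_div_add_eq_one_sub (x : ι → F) (hx : Function.Injective x) {t : F}
    (ht : ∀ k, t + x k ≠ 0) :
    ∏ k, (t - x k) / (t + x k) = 1 - 2 * ∑ i, x i * schurWeight x i / (t + x i) := by
  set Q : F[X] := Lagrange.nodal univ x - Lagrange.nodal univ (-x)
  have hdeg : Q.degree < #(univ : Finset ι) := by
    rw [← Lagrange.degree_nodal (v := x)]
    exact degree_sub_lt_left (by rw [Lagrange.degree_nodal, Lagrange.degree_nodal])
      Lagrange.nodal_monic.ne_zero
      (by rw [Lagrange.nodal_monic.leadingCoeff, Lagrange.nodal_monic.leadingCoeff])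
  have hinj : Set.InjOn (-x) (univ : Finset ι) := (neg_injective.comp hx).injOn
  have hnodes : ∀ i ∈ (univ : Finset ι), t ≠ (-x) i := fun i _ h =>
    ht i (by rw [h, Pi.neg_apply, neg_add_cancel])
  have hQt := congrArg (eval t) (Lagrange.eq_interpolate hinj hdeg)
  rw [Lagrange.eval_interpolate_not_at_node _ hnodes] at hQt
  have hsum : ∑ i, Lagrange.nodalWeight univ (-x) i * (t - (-x) i)⁻¹ * eval ((-x) i) Q =
      -(2 * ∑ i, x i * schurWeight x i / (t + x i)) := by
    rw [mul_sum, ← sum_neg_distrib]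
    refine sum_congr rfl fun i _ => ?_
    rw [eval_sub, Lagrange.eval_nodal_at_node (mem_univ i), sub_zero, Lagrange.eval_nodal,
      mul_right_comm]
    simp only [Pi.neg_apply, nodalWeight_neg_mul_prod, sub_neg_eq_add]
    ring
  rw [hsum, eval_sub, Lagrange.eval_nodal, Lagrange.eval_nodal] at hQt
  simp only [Pi.neg_apply, sub_neg_eq_add] at hQt
  rw [prod_div_distrib, div_eq_iff (prod_ne_zero_iff.mpr fun k _ => ht k)]
  linear_combination hQt

lemma sum_schurWeight_of_odd (x : ι → F) (hm : Odd (Fintype.card ι)) (hx : Function.Injective x)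
    (h2 : (2 : F) ≠ 0) (hx0 : ∀ k, x k ≠ 0) : ∑ i, schurWeight x i = 1 := by
  have h := prod_sub_div_add_eq_one_sub x hx (t := 0) (by simpa using hx0)
  have hlhs : ∏ k, (0 - x k) / (0 + x k) = -1 := by
    simp only [zero_sub, zero_add, neg_div, div_self (hx0 _), prod_const, card_univ,
      hm.neg_one_pow]
  have hrhs : ∑ i, x i * schurWeight x i / (0 + x i) = ∑ i, schurWeight x i :=
    sum_congr rfl fun i _ => by rw [zero_add, mul_div_cancel_left₀ _ (hx0 i)]
  rw [hlhs, hrhs] at h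
  exact mul_left_cancel₀ h2 (by linear_combination h)

lemma sum_sub_div_add_mul_schurWeight (x : ι → F) (hm : Odd (Fintype.card ι))
    (hx : Function.Injective x) (h2 : (2 : F) ≠ 0) (hx0 : ∀ k, x k ≠ 0) {t : F}
    (ht : ∀ k, t + x k ≠ 0) :
    ∑ i, (t - x i) / (t + x i) * schurWeight x i = ∏ k, (t - x k) / (t + x k) := by
  rw [prod_sub_div_add_eq_one_sub x hx ht, ← sum_schurWeight_of_odd x hm hx h2 hx0, mul_sum,
    ← sum_sub_distrib]
  refine sum_congr rfl fun i _ => ?_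
  field_simp [ht i]
  ring

def schurMatrix {m : ℕ} (x : Fin m → F) : Matrix (Fin m) (Fin m) F :=
  Matrix.of fun i j => (x i - x j) / (x i + x j)

noncomputable def schurProduct {m : ℕ} (x : Fin m → F) : F :=
  ∏ i, ∏ j ∈ Ioi i, (x i - x j) / (x i + x j)

lemma schurProduct_succ {m : ℕ} (x : Fin (m + 1) → F) :
    schurProduct x =
      (∏ k : Fin m, (x 0 - x k.succ) / (x 0 + x k.succ)) * schurProduct (x ∘ Fin.succ) := by
  rw [schurProduct, Fin.prod_univ_succ, Fin.prod_Ioi_zero]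
  congr 1
  exact prod_congr rfl fun i _ =>
    Fin.prod_Ioi_succ (fun k => (x i.succ - x k) / (x i.succ + x k)) i

lemma neg_one_pow_mul_schurProduct_succAbove {m : ℕ} (x : Fin (m + 1) → F)
    (hx : Function.Injective x) (hsum : ∀ i j, x i + x j ≠ 0) (j : Fin (m + 1)) :
    (-1) ^ (j : ℕ) * schurProduct (x ∘ j.succAbove) = schurProduct x * schurWeight x j := by
  have hanti : ∀ i k, (x i - x k) / (x i + x k) = -((x k - x i) / (x k + x i)) := fun i k => by
    rw [← neg_div, neg_sub, add_comm]
  have hinv : (∏ i ∈ univ.erase j, (x j - x i) / (x j + x i)) * schurWeight x j = 1 := by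
    rw [schurWeight, ← prod_mul_distrib]
    refine prod_eq_one fun i hi => ?_
    have hji : x j - x i ≠ 0 := sub_ne_zero.mpr (hx.ne (ne_of_mem_erase hi).symm)
    field_simp [hsum j i, hji]
  rw [schurProduct.eq_1 x, Fin.prod_prod_Ioi_eq_succAbove _ j,
    Fin.prod_Iio_mul_prod_Ioi_of_antisymm _ hanti j]
  change _ = schurProduct (x ∘ j.succAbove) * _ * _
  linear_combination (-(-1) ^ (j : ℕ) * schurProduct (x ∘ j.succAbove)) * hinv

lemma pf_schurMatrix_add_two {n : ℕ}
    (ih : ∀ x : Fin (2 * n) → F, Function.Injective x → (∀ i j, x i + x j ≠ 0) →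
      pf F (2 * n) (schurMatrix x) = schurProduct x)
    (x : Fin (2 * n + 2) → F) (hx : Function.Injective x) (hsum : ∀ i j, x i + x j ≠ 0) :
    pf F (2 * n + 2) (schurMatrix x) = schurProduct x := by
  set y := x ∘ Fin.succ
  have hy : Function.Injective y := hx.comp (Fin.succ_injective _)
  have h2x : ∀ k, (2 : F) * x k ≠ 0 := fun k => by rw [two_mul]; exact hsum k k
  have hterm : ∀ j : Fin (2 * n + 1),
      (-1) ^ (j : ℕ) * schurMatrix x 0 j.succ *
          pf F (2 * n) ((schurMatrix x).submatrix (Fin.succ ∘ j.succAbove)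
            (Fin.succ ∘ j.succAbove)) =
        schurProduct y * ((x 0 - y j) / (x 0 + y j) * schurWeight y j) := fun j => by
    rw [show (schurMatrix x).submatrix (Fin.succ ∘ j.succAbove) (Fin.succ ∘ j.succAbove) =
        schurMatrix (y ∘ j.succAbove) from rfl,
      ih _ (hy.comp Fin.succAbove_right_injective) fun a b => hsum _ _, mul_right_comm,
      neg_one_pow_mul_schurProduct_succAbove y hy (fun a b => hsum _ _) j]
    simp only [schurMatrix, Matrix.of_apply, y, Function.comp_apply]
    ring
  rw [pf_add_two, sum_congr rfl fun j _ => hterm j, ← mul_sum,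
    sum_sub_div_add_mul_schurWeight y (by rw [Fintype.card_fin]; exact odd_two_mul_add_one n)
      hy (left_ne_zero_of_mul (h2x 0)) (fun k => right_ne_zero_of_mul (h2x k.succ))
      (fun k => hsum 0 k.succ),
    schurProduct_succ x, mul_comm]
  rfl

theorem pf_schurMatrix (n : ℕ) (x : Fin (2 * n) → F) (hx : Function.Injective x)
    (hsum : ∀ i j, x i + x j ≠ 0) :
    pf F (2 * n) (schurMatrix x) = schurProduct x := by
  induction n with
  | zero => simp [pf, schurProduct]
  | succ n ih => exact pf_schurMatrix_add_two ih x hx hsum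

end

/-- Schur's Pfaffian identity: for an even number N = 2n of fields with distinct parameters,
`Pf[(p_i - p_j)/(2(p_i + p_j))] = 2^{-N/2} Π_{i<j} (p_i - p_j)/(p_i + p_j)`
(the vacuum expectation value of a product of an even number of fermionic fields). -/
theorem wick_pfaffian (n : ℕ) (p : Fin (2*n) → ℝ) (hinj : Function.Injective p)
    (hsum : ∀ i j : Fin (2*n), p i + p j ≠ 0) :
    pf ℝ (2*n) (fun i j => (p i - p j) / (2 * (p i + p j))) =
      ((2:ℝ)^n)⁻¹ * ∏ i : Fin (2*n), ∏ j ∈ Finset.Ioi i, (p i - p j) / (p i + p j) := by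
  have hhalf : (fun i j => (p i - p j) / (2 * (p i + p j)) : Matrix (Fin (2*n)) (Fin (2*n)) ℝ) =
      (2 : ℝ)⁻¹ • schurMatrix p := by
    ext i j
    rw [Matrix.smul_apply, schurMatrix, Matrix.of_apply, smul_eq_mul, mul_comm, ← div_div,
      div_eq_inv_mul]
  rw [hhalf, pf_smul, pf_schurMatrix n p hinj hsum, Nat.mul_div_cancel_left n two_pos, inv_pow,
    schurProduct]
end

section
/- Pfaffian–Plücker relation: for odd p and odd r, and index sequences (i_1,...,i_p), (j_1,...,j_r), Σ_{k=1}^p (-1)^{k-1} Pf(i_1,...,î_k,...,i_p) Pf(i_k, j_1,...,j_r) = Σ_{s=1}^r (-1)^{s-1} Pf(i_1,...,i_p, j_s) Pf(j_1,...,ĵ_s,...,j_r), where Pf(S) denotes the Pfaffian of the principal submatrix on the indices S of a fixed skew-symmetric matrix, and hats denote omitted indices. -/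
open Matrix

/-!
Expanding `Pf(i_k, j_1, …, j_r)` along its first row and `Pf(i_1, …, i_p, j_s)` along its last
column turns both sides into the same double sum
`Σ_{k,s} (-1)^(k+s) Pf(i_1, …, î_k, …, i_p) a_{i_k j_s} Pf(j_1, …, ĵ_s, …, j_r)`.
Since `pf` is defined by first-row expansion, the content is the last-column expansion, proved by
induction: expanding along the first row and then the last column, or in the other order, gives two
double sums over the deleted pair of indices, matched by the involution
`(j, l) ↦ (j.succAbove l, l.predAbove j)`.
-/

theorem Fin.sum_sum_succAbove_predAbove {M : Type*} [AddCommMonoid M] {n : ℕ}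
    (f : Fin (n + 2) → Fin (n + 1) → M) :
    ∑ i : Fin (n + 2), ∑ j : Fin (n + 1), f (i.succAbove j) (j.predAbove i) = ∑ i, ∑ j, f i j := by
  let swap : Fin (n + 2) × Fin (n + 1) → Fin (n + 2) × Fin (n + 1) :=
    fun x => (x.1.succAbove x.2, x.2.predAbove x.1)
  have hswap : Function.Involutive swap := fun x =>
    Prod.ext (succAbove_succAbove_predAbove x.1 x.2) (predAbove_predAbove_succAbove x.1 x.2)
  simp only [← Fintype.sum_prod_type']
  exact Equiv.sum_comp (hswap.toPerm swap) fun x => f x.1 x.2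

theorem Fin.succAbove_comp_succAbove_predAbove {n : ℕ} (i : Fin (n + 2)) (j : Fin (n + 1)) :
    (i.succAbove j).succAbove ∘ (j.predAbove i).succAbove = i.succAbove ∘ j.succAbove :=
  funext (succAbove_succAbove_succAbove_predAbove i j)

section

open Fin

variable {R : Type*} [CommRing R]

theorem pf_add_two_row_zero (N : ℕ) (M : Matrix (Fin (N + 2)) (Fin (N + 2)) R) :
    pf R (N + 2) M = ∑ j : Fin (N + 1), (-1) ^ (j : ℕ) * M 0 j.succ *
      pf R N (M.submatrix (succ ∘ j.succAbove) (succ ∘ j.succAbove)) := by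
  rw [pf]; rfl

theorem pf_of_odd : ∀ (N : ℕ), Odd N → ∀ M : Matrix (Fin N) (Fin N) R, pf R N M = 0
  | 0, h, _ => absurd h (by decide)
  | 1, _, _ => rfl
  | N + 2, h, M => by
    have hN : Odd N := by simpa [Nat.odd_add] using h
    simp [pf_add_two_row_zero, pf_of_odd N hN]

theorem neg_one_pow_mul_pf (N : ℕ) (M : Matrix (Fin N) (Fin N) R) :
    (-1) ^ N * pf R N M = pf R N M := by
  rcases N.even_or_odd with h | h
  · rw [h.neg_one_pow, one_mul]
  · rw [pf_of_odd N h, mul_zero]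

theorem pf_add_two_column_last :
    ∀ (N : ℕ) (M : Matrix (Fin (N + 2)) (Fin (N + 2)) R),
    pf R (N + 2) M = ∑ k : Fin (N + 1), (-1) ^ (k : ℕ) *
      pf R N (M.submatrix (castSucc ∘ k.succAbove) (castSucc ∘ k.succAbove)) *
      M k.castSucc (last (N + 1))
  | 0, M => by simp [pf]
  | 1, M => by simp [pf]
  | N + 2, M => by
    have row_zero_minor : ∀ j : Fin (N + 2),
        pf R (N + 2) (M.submatrix (succ ∘ j.castSucc.succAbove) (succ ∘ j.castSucc.succAbove)) =
          ∑ l : Fin (N + 1), (-1) ^ (l : ℕ) *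
            pf R N (M.submatrix (castSucc ∘ succ ∘ j.succAbove ∘ l.succAbove)
              (castSucc ∘ succ ∘ j.succAbove ∘ l.succAbove)) *
            M (j.succAbove l).succ.castSucc (last (N + 3)) := fun j => by
      rw [pf_add_two_column_last N]
      refine Finset.sum_congr rfl fun l _ => ?_
      simp [Function.comp_def, castSucc_succAbove_castSucc]
    have last_column_minor : ∀ k : Fin (N + 2),
        pf R (N + 2) (M.submatrix (castSucc ∘ k.succ.succAbove) (castSucc ∘ k.succ.succAbove)) =
          ∑ l : Fin (N + 1), (-1) ^ (l : ℕ) * M 0 (k.succAbove l).succ.castSucc *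
            pf R N (M.submatrix (castSucc ∘ succ ∘ k.succAbove ∘ l.succAbove)
              (castSucc ∘ succ ∘ k.succAbove ∘ l.succAbove)) := fun k => by
      rw [pf_add_two_row_zero]
      refine Finset.sum_congr rfl fun l _ => ?_
      simp [Function.comp_def]
    have succ_comp_castSucc : succ ∘ castSucc = castSucc ∘ (succ : Fin (N + 2) → _) :=
      funext succ_castSucc
    rw [pf_add_two_row_zero, sum_univ_castSucc]
    conv_rhs => rw [sum_univ_succ]
    simp only [succAbove_last, succAbove_zero, val_last, val_zero, pow_zero, one_mul, castSucc_zero,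
      succ_last, succ_castSucc, succ_comp_castSucc, row_zero_minor, last_column_minor]
    -- the term deleting both `0` and the last index; its sign `(-1) ^ N` only matters for odd `N`,
    -- where the Pfaffian vanishes
    rw [add_comm, mul_right_comm _ (M 0 _), neg_one_pow_mul_pf]
    congr 1
    simp only [Finset.mul_sum, Finset.sum_mul]
    conv_rhs => rw [← Fin.sum_sum_succAbove_predAbove]
    refine Finset.sum_congr rfl fun j _ => Finset.sum_congr rfl fun l _ => ?_
    rw [succAbove_succAbove_predAbove, succAbove_comp_succAbove_predAbove, val_succ, val_castSucc]
    linear_combination M 0 j.succ.castSucc * M (j.succAbove l).succ.castSucc (last (N + 3)) *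
      pf R N (M.submatrix (castSucc ∘ succ ∘ j.succAbove ∘ l.succAbove)
        (castSucc ∘ succ ∘ j.succAbove ∘ l.succAbove)) *
      neg_one_pow_succAbove_add_predAbove (R := R) j l

theorem pf_submatrix_cons {ι : Type*} (A : Matrix ι ι R) (N : ℕ) (x : ι) (y : Fin (N + 1) → ι) :
    pf R (N + 2) (A.submatrix (cons x y) (cons x y)) = ∑ s : Fin (N + 1), (-1) ^ (s : ℕ) *
      A x (y s) * pf R N (A.submatrix (y ∘ s.succAbove) (y ∘ s.succAbove)) := by
  simp [pf_add_two_row_zero, Function.comp_def]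

theorem pf_submatrix_snoc {ι : Type*} (A : Matrix ι ι R) (N : ℕ) (x : Fin (N + 1) → ι) (y : ι) :
    pf R (N + 2) (A.submatrix (snoc x y) (snoc x y)) = ∑ k : Fin (N + 1), (-1) ^ (k : ℕ) *
      pf R N (A.submatrix (x ∘ k.succAbove) (x ∘ k.succAbove)) * A (x k) y := by
  simp [pf_add_two_column_last, Function.comp_def]

end

theorem pfaffian_plucker_general {R : Type*} [CommRing R] (n a b : ℕ)
    (A : Matrix (Fin (2*n)) (Fin (2*n)) R)
    (i : Fin (2*a+1) → Fin (2*n)) (j : Fin (2*b+1) → Fin (2*n)) :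
    ∑ k : Fin (2*a+1), (-1 : R)^(k : ℕ) *
        pf R (2*a) (A.submatrix (i ∘ k.succAbove) (i ∘ k.succAbove)) *
        pf R (2*b+2) (A.submatrix (Fin.cons (i k) j) (Fin.cons (i k) j)) =
      ∑ s : Fin (2*b+1), (-1 : R)^(s : ℕ) *
        pf R (2*a+2) (A.submatrix (Fin.snoc i (j s)) (Fin.snoc i (j s))) *
        pf R (2*b) (A.submatrix (j ∘ s.succAbove) (j ∘ s.succAbove)) := by
  simp only [pf_submatrix_cons, pf_submatrix_snoc, Finset.mul_sum, Finset.sum_mul]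
  rw [Finset.sum_comm]
  refine Finset.sum_congr rfl fun s _ => Finset.sum_congr rfl fun k _ => ?_
  ring

/-- The Pfaffian–Plücker relation: for a fixed `2n × 2n` skew-symmetric matrix `A` over a
commutative ring and index sequences `(i_1, …, i_p)`, `(j_1, …, j_r)` with `p = 2a+1`,
`r = 2b+1` odd,
`Σ_{k=1}^p (-1)^{k-1} Pf(i_1,…,î_k,…,i_p) Pf(i_k, j_1,…,j_r)
  = Σ_{s=1}^r (-1)^{s-1} Pf(i_1,…,i_p, j_s) Pf(j_1,…,ĵ_s,…,j_r)`,
where `Pf(S)` is the Pfaffian of the principal submatrix of `A` on the indices `S` and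
hats denote omitted indices. -/
theorem pfaffian_plucker {R : Type*} [CommRing R] (n a b : ℕ)
    (A : Matrix (Fin (2*n)) (Fin (2*n)) R) (hA : Aᵀ = -A)
    (i : Fin (2*a+1) → Fin (2*n)) (j : Fin (2*b+1) → Fin (2*n)) :
    ∑ k : Fin (2*a+1), (-1 : R)^(k : ℕ) *
        pf R (2*a) (A.submatrix (i ∘ k.succAbove) (i ∘ k.succAbove)) *
        pf R (2*b+2) (A.submatrix (Fin.cons (i k) j) (Fin.cons (i k) j)) =
      ∑ s : Fin (2*b+1), (-1 : R)^(s : ℕ) *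
        pf R (2*a+2) (A.submatrix (Fin.snoc i (j s)) (Fin.snoc i (j s))) *
        pf R (2*b) (A.submatrix (j ∘ s.succAbove) (j ∘ s.succAbove)) :=
  pfaffian_plucker_general n a b A i j
end

section
/- Let W be an n×m matrix (n ≥ m, n + m even) such that the skew-symmetric matrix Ŵ = [[0, W], [-Wᵀ, 0]] has all principal Pfaffians nonnegative (totally nonnegative Pfaffian). If L is an n×n totally nonnegative matrix and R an m×m totally nonnegative matrix, then both [[0, LW], [-(LW)ᵀ, 0]] and [[0, WR], [-(WR)ᵀ, 0]] are totally nonnegative Pfaffians. -/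
open Matrix

/-- A skew-symmetric real matrix is a *totally nonnegative Pfaffian* if every even-size
principal submatrix has nonnegative Pfaffian. -/
noncomputable def IsTNNPfaffian {N : ℕ} (A : Matrix (Fin N) (Fin N) ℝ) : Prop :=
  ∀ α : Finset (Fin N), Even α.card →
    0 ≤ pf ℝ α.card (A.submatrix (α.orderEmbOfFin rfl) (α.orderEmbOfFin rfl))

/-- A real matrix is *totally nonnegative* if all its minors are nonnegative. -/
def IsTotallyNonneg {n m : ℕ} (L : Matrix (Fin n) (Fin m) ℝ) : Prop :=
  ∀ (k : ℕ) (f : Fin k → Fin n) (g : Fin k → Fin m), StrictMono f → StrictMono g →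
    0 ≤ (L.submatrix f g).det

/-- The `(n+m) × (n+m)` skew-symmetric matrix `[[0, V], [-Vᵀ, 0]]` built from an
`n × m` matrix `V`. -/
noncomputable def hatMat {n m : ℕ} (V : Matrix (Fin n) (Fin m) ℝ) :
    Matrix (Fin (n + m)) (Fin (n + m)) ℝ :=
  (Matrix.fromBlocks 0 V (-Vᵀ) 0).submatrix finSumFinEquiv.symm finSumFinEquiv.symm

/-!
Deleting the rows and columns outside an index set from `[[0, V], [-Vᵀ, 0]]` leaves a matrix of
the same shape built from a submatrix `V'` of `V`. Expanding its Pfaffian along the first row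
shows that it vanishes unless `V'` is square, and equals `(-1) ^ (k choose 2) * det V'` when `V'`
is `k × k`. So `[[0, V], [-Vᵀ, 0]]` is a totally nonnegative Pfaffian exactly when every `k × k`
minor of `V` has the sign of `(-1) ^ (k choose 2)`, and by the Cauchy–Binet formula this sign
condition survives multiplication by a totally nonnegative matrix on either side.
-/

open Finset

theorem Fin.sum_injective_eq_sum_strictMono_perm {k : ℕ} {α M : Type*} [LinearOrder α]
    [Fintype α] [DecidableEq α] [AddCommMonoid M] [DecidablePred (StrictMono : (Fin k → α) → Prop)]
    (f : (Fin k → α) → M) :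
    ∑ φ ∈ {φ | Function.Injective φ}, f φ =
      ∑ e ∈ {e | StrictMono e}, ∑ σ : Equiv.Perm (Fin k), f (e ∘ σ) := by
  rw [← sum_product' (f := fun (e : Fin k → α) (σ : Equiv.Perm (Fin k)) => f (e ∘ σ))]
  symm
  refine sum_nbij (fun x => x.1 ∘ x.2) ?_ ?_ ?_ (fun _ _ => rfl)
  · intro x hx
    simp only [mem_product, mem_filter, mem_univ, true_and, and_true] at hx ⊢
    exact hx.injective.comp x.2.injective
  · rintro ⟨e, σ⟩ he ⟨e', σ'⟩ he' h
    simp only [mem_coe, mem_product, mem_filter, mem_univ, true_and, and_true] at he he'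
    obtain rfl : e = e' := (he.range_inj he').1 <| by
      simpa [Set.range_comp] using congrArg Set.range h
    simp only [Prod.mk.injEq, true_and]
    exact Equiv.ext fun i => he.injective (congrFun h i)
  · intro φ hφ
    simp only [mem_coe, mem_filter, mem_univ, true_and] at hφ
    refine ⟨(φ ∘ Tuple.sort φ, (Tuple.sort φ)⁻¹), ?_, ?_⟩
    · simpa using
        (Tuple.monotone_sort φ).strictMono_of_injective (hφ.comp (Tuple.sort φ).injective)
    · ext i
      simp

namespace Matrix

section CommRing
variable {R : Type*} [CommRing R]

theorem det_mul_eq_sum_prod_mul_det {m n : Type*} [Fintype m] [DecidableEq m] [Fintype n]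
    [DecidableEq n] (A : Matrix m n R) (B : Matrix n m R) :
    (A * B).det = ∑ φ : m → n, (∏ i, A i (φ i)) * (B.submatrix φ id).det := by
  have hrows : A * B = fun i => ∑ j, A i j • B j := by
    ext i l
    simp [mul_apply, Finset.sum_apply]
  rw [hrows]
  exact (detRowAlternating.toMultilinearMap.map_sum _).trans <| sum_congr rfl fun φ _ =>
    detRowAlternating.toMultilinearMap.map_smul_univ (fun i => A i (φ i)) (fun i => B (φ i))

/-- **Cauchy–Binet formula**. -/
theorem det_mul_eq_sum_strictMono {k n : ℕ} (A : Matrix (Fin k) (Fin n) R)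
    (B : Matrix (Fin n) (Fin k) R) :
    (A * B).det = ∑ e ∈ {e | StrictMono e}, (A.submatrix id e).det * (B.submatrix e id).det := by
  have hinj (φ : Fin k → Fin n) (hφ : (∏ i, A i (φ i)) * (B.submatrix φ id).det ≠ 0) :
      Function.Injective φ := by
    by_contra hφ'
    obtain ⟨i, j, hij, hne⟩ := Function.not_injective_iff.1 hφ'
    exact hφ <| by rw [det_zero_of_row_eq hne (by ext; simp [hij]), mul_zero]
  have hperm (e : Fin k → Fin n) : ∑ σ : Equiv.Perm (Fin k),
      (∏ i, A i ((e ∘ σ) i)) * (B.submatrix (e ∘ σ) id).det =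
        (A.submatrix id e).det * (B.submatrix e id).det := by
    rw [← det_transpose (A.submatrix id e), det_apply, sum_mul]
    refine sum_congr rfl fun σ _ => ?_
    rw [show B.submatrix (e ∘ σ) id = (B.submatrix e id).submatrix σ id from rfl, det_permute]
    simp only [Function.comp_apply, transpose_apply, submatrix_apply, id_eq, Units.smul_def,
      zsmul_eq_mul]
    ring
  rw [det_mul_eq_sum_prod_mul_det, ← sum_filter_of_ne fun φ _ => hinj φ,
    Fin.sum_injective_eq_sum_strictMono_perm]
  exact sum_congr rfl fun e _ => hperm e

theorem det_submatrix_mul_eq_sum_strictMono {l n p k : ℕ} (A : Matrix (Fin l) (Fin n) R)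
    (B : Matrix (Fin n) (Fin p) R) (u : Fin k → Fin l) (v : Fin k → Fin p) :
    ((A * B).submatrix u v).det =
      ∑ e ∈ {e | StrictMono e}, (A.submatrix u e).det * (B.submatrix e v).det := by
  rw [submatrix_mul _ _ u id v Function.bijective_id, det_mul_eq_sum_strictMono]
  rfl

end CommRing

theorem nonneg_mul_det_submatrix_mul {R : Type*} [CommRing R] [PartialOrder R]
    [IsOrderedAddMonoid R] {c : R} {l n p k : ℕ} {A : Matrix (Fin l) (Fin n) R}
    {B : Matrix (Fin n) (Fin p) R} {u : Fin k → Fin l} {v : Fin k → Fin p}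
    (h : ∀ e : Fin k → Fin n, StrictMono e →
      0 ≤ c * ((A.submatrix u e).det * (B.submatrix e v).det)) :
    0 ≤ c * ((A * B).submatrix u v).det := by
  rw [det_submatrix_mul_eq_sum_strictMono, mul_sum]
  exact sum_nonneg fun e he => h e (mem_filter.1 he).2

end Matrix

theorem Fin.val_succAbove_eq_ite {n : ℕ} (p : Fin (n + 1)) (i : Fin n) :
    (p.succAbove i : ℕ) = if (i : ℕ) < p then (i : ℕ) else i + 1 := by
  rw [Fin.succAbove]
  split_ifs <;> simp_all [Fin.lt_def]

section skewBlock
variable {R : Type*} [CommRing R]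

/-- `hatMat V` for `V : Matrix (Fin a) (Fin b) R`, reindexed by `Fin N` with `a + b = N` so that
the Pfaffian recursion, which peels off `N + 2`, applies without casts. -/
def skewBlock (a b N : ℕ) (h : a + b = N) (V : Matrix (Fin a) (Fin b) R) :
    Matrix (Fin N) (Fin N) R := fun i j =>
  if hi : (i : ℕ) < a then
    if hj : (j : ℕ) < a then 0 else V ⟨i, hi⟩ ⟨j - a, by omega⟩
  else
    if hj : (j : ℕ) < a then -V ⟨j, hj⟩ ⟨i - a, by omega⟩ else 0

variable {a b N : ℕ}

theorem skewBlock_apply_eq_zero (h : a + b = N) (V : Matrix (Fin a) (Fin b) R) {i j : Fin N}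
    (hij : (i : ℕ) < a ↔ (j : ℕ) < a) :
    skewBlock a b N h V i j = 0 := by
  unfold skewBlock
  split_ifs <;> first | rfl | omega

theorem skewBlock_apply_of_val_eq (h : a + b = N) (V : Matrix (Fin a) (Fin b) R) {i j : Fin N}
    {i' : Fin a} {j' : Fin b} (hi : (i : ℕ) = i') (hj : (j : ℕ) = a + j') :
    skewBlock a b N h V i j = V i' j' := by
  rw [skewBlock, dif_pos (by omega), dif_neg (by omega)]
  exact congrArg₂ V (Fin.ext hi) (Fin.ext (by simp only; omega))

theorem skewBlock_succAbove_succ (h : (a + 1) + (b + 1) = N + 2) (h' : a + b = N)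
    (V : Matrix (Fin (a + 1)) (Fin (b + 1)) R) {j : Fin (N + 1)} {c : Fin (b + 1)}
    (hj : (j : ℕ) = a + c) :
    (fun p q => skewBlock (a + 1) (b + 1) (N + 2) h V (j.succAbove p).succ (j.succAbove q).succ) =
      skewBlock a b N h' (V.submatrix Fin.succ c.succAbove) := by
  ext p q
  -- since `a ≤ j`, the index `(j.succAbove p).succ` lies in the first block iff `p < a`
  by_cases hp : (p : ℕ) < a <;> by_cases hq : (q : ℕ) < a <;>
    simp only [skewBlock, submatrix_apply, hp, hq, reduceDIte, Fin.val_succ,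
      Fin.val_succAbove_eq_ite] <;>
    split_ifs <;> first
    | omega
    | rfl
    | (try rw [neg_inj]); refine congrArg₂ V (Fin.ext ?_) (Fin.ext ?_) <;>
        grind [Fin.val_succAbove_eq_ite]

theorem pf_skewBlock_of_ne (h : a + b = N) (hab : a ≠ b) (V : Matrix (Fin a) (Fin b) R) :
    pf R N (skewBlock a b N h V) = 0 := by
  induction N using Nat.strong_induction_on generalizing a b with
  | _ N ih =>
  match N, a, b with
  | 0, _, _ => omega
  | 1, _, _ => rfl
  | N + 2, 0, _ =>
    refine sum_eq_zero fun j _ => ?_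
    rw [skewBlock_apply_eq_zero h V (by simp), mul_zero, zero_mul]
  | N + 2, _ + 1, 0 =>
    refine sum_eq_zero fun j _ => ?_
    rw [skewBlock_apply_eq_zero h V (by simp; omega), mul_zero, zero_mul]
  | N + 2, a + 1, b + 1 =>
    refine sum_eq_zero fun j _ => ?_
    rcases lt_or_ge (j : ℕ) a with hj | hj
    · rw [skewBlock_apply_eq_zero h V (by simp; omega), mul_zero, zero_mul]
    · rw [skewBlock_succAbove_succ h (by omega) V (c := ⟨j - a, by omega⟩) (by simp; omega),
        ih N (by omega) _ (by omega), mul_zero]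

theorem pf_skewBlock_self {k N : ℕ} (h : k + k = N) (V : Matrix (Fin k) (Fin k) R) :
    pf R N (skewBlock k k N h V) = (-1) ^ k.choose 2 * V.det := by
  induction k generalizing N with
  | zero => subst h; simp [pf]
  | succ k ih =>
    obtain rfl : N = k + k + 2 := by omega
    refine (Fin.sum_univ_add (a := k) (b := k + 1) _).trans ?_
    rw [sum_eq_zero fun i _ => by
        rw [skewBlock_apply_eq_zero h V (by simp), mul_zero, zero_mul],
      zero_add, det_succ_row_zero, mul_sum]
    refine sum_congr rfl fun t _ => ?_
    rw [skewBlock_apply_of_val_eq h V (i' := 0) (j' := t) (by simp) (by simp; omega),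
      skewBlock_succAbove_succ h rfl V (c := t) (by simp), ih rfl, Fin.val_natAdd,
      Nat.choose_succ_succ', Nat.choose_one_right, pow_add, pow_add]
    ring

end skewBlock

section blockIndex
variable {a b N n m : ℕ}

/-- `Fin.append (Fin.castAdd m ∘ f) (Fin.natAdd n ∘ g)`, reindexed by `Fin N` with `a + b = N`. -/
def blockIndex (h : a + b = N) (f : Fin a → Fin n) (g : Fin b → Fin m) : Fin N → Fin (n + m) :=
  fun i => if hi : (i : ℕ) < a then Fin.castAdd m (f ⟨i, hi⟩)
    else Fin.natAdd n (g ⟨i - a, by omega⟩)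

theorem hatMat_submatrix_blockIndex (V : Matrix (Fin n) (Fin m) ℝ) (h : a + b = N)
    (f : Fin a → Fin n) (g : Fin b → Fin m) :
    (hatMat V).submatrix (blockIndex h f g) (blockIndex h f g) =
      skewBlock a b N h (V.submatrix f g) := by
  ext i j
  simp only [hatMat, blockIndex, skewBlock, submatrix_apply]
  split_ifs <;> simp [finSumFinEquiv_symm_apply_castAdd, finSumFinEquiv_symm_apply_natAdd]

theorem blockIndex_strictMono (h : a + b = N) {f : Fin a → Fin n} {g : Fin b → Fin m}
    (hf : StrictMono f) (hg : StrictMono g) : StrictMono (blockIndex h f g) := by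
  intro i j hij
  rw [Fin.lt_def] at hij
  simp only [blockIndex]
  split_ifs with hi hj hj
  · exact Fin.strictMono_castAdd m (hf (Fin.mk_lt_mk.2 hij))
  · exact Fin.lt_def.2 (by simp; omega)
  · omega
  · exact Fin.strictMono_natAdd n (hg (Fin.mk_lt_mk.2 (by omega)))

end blockIndex

section parts
variable {n m : ℕ}

def leftPart (α : Finset (Fin (n + m))) : Finset (Fin n) := {i | Fin.castAdd m i ∈ α}

def rightPart (α : Finset (Fin (n + m))) : Finset (Fin m) := {j | Fin.natAdd n j ∈ α}

theorem mem_leftPart {α : Finset (Fin (n + m))} {i : Fin n} :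
    i ∈ leftPart α ↔ Fin.castAdd m i ∈ α := by
  simp [leftPart]

theorem mem_rightPart {α : Finset (Fin (n + m))} {j : Fin m} :
    j ∈ rightPart α ↔ Fin.natAdd n j ∈ α := by
  simp [rightPart]

theorem card_leftPart_add_card_rightPart (α : Finset (Fin (n + m))) :
    (leftPart α).card + (rightPart α).card = α.card := by
  rw [leftPart, rightPart, card_filter, card_filter,
    ← Fin.sum_univ_add (f := fun x => if x ∈ α then 1 else 0), ← card_filter, filter_mem_eq_inter,
    univ_inter]

theorem orderEmbOfFin_eq_blockIndex (α : Finset (Fin (n + m))) :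
    ⇑(α.orderEmbOfFin rfl) = blockIndex (card_leftPart_add_card_rightPart α)
      ((leftPart α).orderEmbOfFin rfl) ((rightPart α).orderEmbOfFin rfl) := by
  refine (orderEmbOfFin_unique _ (fun i => ?_) (blockIndex_strictMono _
    (OrderEmbedding.strictMono _) (OrderEmbedding.strictMono _))).symm
  simp only [blockIndex]
  split_ifs
  · exact mem_leftPart.1 (orderEmbOfFin_mem _ _ _)
  · exact mem_rightPart.1 (orderEmbOfFin_mem _ _ _)

end parts

theorem IsTNNPfaffian.pf_submatrix_nonneg {M : ℕ} {A : Matrix (Fin M) (Fin M) ℝ}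
    (hA : IsTNNPfaffian A) {N : ℕ} (hN : Even N) {F : Fin N → Fin M} (hF : StrictMono F) :
    0 ≤ pf ℝ N (A.submatrix F F) := by
  obtain ⟨α, hα, rfl⟩ : ∃ α : Finset (Fin M), ∃ hα : α.card = N, F = α.orderEmbOfFin hα :=
    ⟨univ.map ⟨F, hF.injective⟩, by simp, orderEmbOfFin_unique _ (by simp) hF⟩
  subst hα
  exact hA α hN

theorem pf_skewBlock_submatrix_nonneg {n m a b N : ℕ} {V : Matrix (Fin n) (Fin m) ℝ}
    (hV : ∀ k (u : Fin k → Fin n) (v : Fin k → Fin m), StrictMono u → StrictMono v →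
      0 ≤ (-1) ^ k.choose 2 * (V.submatrix u v).det)
    (h : a + b = N) {f : Fin a → Fin n} {g : Fin b → Fin m} (hf : StrictMono f)
    (hg : StrictMono g) :
    0 ≤ pf ℝ N (skewBlock a b N h (V.submatrix f g)) := by
  obtain rfl | hab := eq_or_ne a b
  · rw [pf_skewBlock_self]
    exact hV a f g hf hg
  · rw [pf_skewBlock_of_ne h hab]

theorem isTNNPfaffian_hatMat_iff {n m : ℕ} (V : Matrix (Fin n) (Fin m) ℝ) :
    IsTNNPfaffian (hatMat V) ↔ ∀ k (u : Fin k → Fin n) (v : Fin k → Fin m),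
      StrictMono u → StrictMono v → 0 ≤ (-1) ^ k.choose 2 * (V.submatrix u v).det := by
  refine ⟨fun hV k u v hu hv => ?_, fun hV α _ => ?_⟩
  · have := hV.pf_submatrix_nonneg ⟨k, rfl⟩ (blockIndex_strictMono rfl hu hv)
    rwa [hatMat_submatrix_blockIndex, pf_skewBlock_self] at this
  · rw [orderEmbOfFin_eq_blockIndex, hatMat_submatrix_blockIndex]
    exact pf_skewBlock_submatrix_nonneg hV _
      (OrderEmbedding.strictMono _) (OrderEmbedding.strictMono _)

theorem tnnPfaffian_mul_general (n m : ℕ)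
    (W : Matrix (Fin n) (Fin m) ℝ) (hW : IsTNNPfaffian (hatMat W))
    (L : Matrix (Fin n) (Fin n) ℝ) (hL : IsTotallyNonneg L)
    (R : Matrix (Fin m) (Fin m) ℝ) (hR : IsTotallyNonneg R) :
    IsTNNPfaffian (hatMat (L * W)) ∧ IsTNNPfaffian (hatMat (W * R)) := by
  rw [isTNNPfaffian_hatMat_iff] at hW
  refine ⟨(isTNNPfaffian_hatMat_iff _).2 fun k u v hu hv => ?_,
    (isTNNPfaffian_hatMat_iff _).2 fun k u v hu hv => ?_⟩
  · refine nonneg_mul_det_submatrix_mul fun e he => ?_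
    rw [mul_left_comm]
    exact mul_nonneg (hL k u e hu he) (hW k e v he hv)
  · refine nonneg_mul_det_submatrix_mul fun e he => ?_
    rw [← mul_assoc]
    exact mul_nonneg (hW k u e hu he) (hR k e v he hv)

/-- If `Ŵ = [[0, W], [-Wᵀ, 0]]` is a totally nonnegative Pfaffian (`n ≥ m`, `n + m` even),
and `L`, `R` are totally nonnegative square matrices of sizes `n`, `m`, then both
`[[0, LW], [-(LW)ᵀ, 0]]` and `[[0, WR], [-(WR)ᵀ, 0]]` are totally nonnegative Pfaffians. -/
theorem tnnPfaffian_mul (n m : ℕ) (hnm : m ≤ n) (hev : Even (n + m))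
    (W : Matrix (Fin n) (Fin m) ℝ) (hW : IsTNNPfaffian (hatMat W))
    (L : Matrix (Fin n) (Fin n) ℝ) (hL : IsTotallyNonneg L)
    (R : Matrix (Fin m) (Fin m) ℝ) (hR : IsTotallyNonneg R) :
    IsTNNPfaffian (hatMat (L * W)) ∧ IsTNNPfaffian (hatMat (W * R)) :=
  tnnPfaffian_mul_general n m W hW L hL R hR
end

section
/- The skew Schur Q polynomial identity Q_{(3,2,1,0)}(c) = q_{32}(c)q_1(c) - q_{31}(c)q_2(c) + q_3(c)q_{21}(c), and in the substitution c_{2k+1} = (a_1^{2k+1} + a_2^{2k+1} + a_3^{2k+1} + a_4^{2k+1})/(2k+1) it factors as Q_{(3,2,1,0)} = 8(a_4+a_3)(a_2+a_4)(a_3+a_2)(a_1+a_4)(a_1+a_3)(a_1+a_2); in particular Q_{(3,2,1,0)}(a) > 0 whenever all a_i > 0. -/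
/-!
`q_k` is the `k`-th coefficient of `E = exp(2ξ)` (the truncation of the exponential series in
its definition does not affect degree `k`), and differentiating gives `E' = 2ξ'E`, i.e.
`k q_k = 2 Σ_{i odd} i c_i q_{k-i}`. This recurrence yields `q_1, …, q_5` as polynomials in
`c_1, c_3, c_5`; expanding the `4 × 4` Pfaffian then gives
`Q_{(3,2,1,0)} = 8/45 c_1^6 - 8/3 c_3 c_1^3 - 8 c_3^2 + 8 c_1 c_5`, and under the power-sum
substitution this is a polynomial identity in `a`.
-/

open Matrix

/-- The generating series ξ(c,p) = Σ_{k odd} c_k p^k as a formal power series. -/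
noncomputable def xi (c : ℕ → ℝ) : PowerSeries ℝ :=
  PowerSeries.mk fun k => if Odd k then c k else 0

/-- The Schur Q polynomials `q k c`, defined by `e^{2ξ(c,p)} = Σ_{k≥0} q_k(c) p^k`. -/
noncomputable def q (c : ℕ → ℝ) (k : ℕ) : ℝ :=
  PowerSeries.coeff (R := ℝ) k
    (∑ j ∈ Finset.range (k+1),
      (PowerSeries.C (R := ℝ) ((j.factorial : ℝ))⁻¹) * ((PowerSeries.C (R := ℝ) 2) * xi c) ^ j)

/-- q_{a,b}(c) = q_a(c) q_b(c) + 2 Σ_{k=1}^b (-1)^k q_{a+k}(c) q_{b-k}(c). -/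
noncomputable def qq (c : ℕ → ℝ) (a b : ℕ) : ℝ :=
  q c a * q c b + 2 * ∑ k ∈ Finset.Icc 1 b, (-1 : ℝ)^k * q c (a + k) * q c (b - k)

/-- `Q_{(3,2,1,0)}(c)`: the Pfaffian of the `4 × 4` skew matrix `(q_{λ_i, λ_j})` for the
strict partition `λ = (3,2,1,0)`. -/
noncomputable def Q3210 (c : ℕ → ℝ) : ℝ :=
  pf ℝ 4 (Matrix.of fun i j : Fin 4 => qq c (![3, 2, 1, 0] i) (![3, 2, 1, 0] j))

/-- The power-sum substitution `c_k = (a_1^k + a_2^k + a_3^k + a_4^k)/k`. -/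
noncomputable def cOf (a : Fin 4 → ℝ) : ℕ → ℝ := fun k => (∑ i, a i ^ k) / k

open PowerSeries

theorem coeff_pow_eq_zero_of_lt {R : Type*} [Semiring R] {f : R⟦X⟧} (hf : constantCoeff f = 0)
    {n j : ℕ} (h : n < j) : coeff n (f ^ j) = 0 :=
  coeff_of_lt_order n <| (ENat.natCast_lt_natCast.2 h).trans_le
    (le_order_pow_of_constantCoeff_eq_zero j hf)

section ExpPartial

variable {K : Type*} [Field K]

noncomputable def expPartial (f : K⟦X⟧) (k : ℕ) : K⟦X⟧ :=
  ∑ j ∈ Finset.range (k + 1), C (j.factorial : K)⁻¹ * f ^ j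

theorem coeff_expPartial_of_le {f : K⟦X⟧} (hf : constantCoeff f = 0) {n k : ℕ} (h : n ≤ k) :
    coeff n (expPartial f k) = coeff n (expPartial f n) := by
  induction k, h using Nat.le_induction with
  | base => rfl
  | succ k hnk ih =>
    rw [expPartial, Finset.sum_range_succ, map_add, ← expPartial, ih, coeff_C_mul,
      coeff_pow_eq_zero_of_lt hf (Nat.lt_succ_of_le hnk), mul_zero, add_zero]

theorem derivative_expPartial_succ [CharZero K] (f : K⟦X⟧) (k : ℕ) :
    d⁄dX K (expPartial f (k + 1)) = d⁄dX K f * expPartial f k := by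
  rw [expPartial, Finset.sum_range_succ', expPartial, Finset.mul_sum, map_add, map_sum]
  simp only [pow_zero, mul_one, derivative_C, add_zero, Derivation.leibniz, smul_eq_mul,
    derivative_pow, add_tsub_cancel_right]
  refine Finset.sum_congr rfl fun j _ => ?_
  have hfact : ((j + 1).factorial : K)⁻¹ * (j + 1 : K) = (j.factorial : K)⁻¹ := by
    rw [Nat.factorial_succ]; push_cast; field_simp
  rw [← hfact, map_mul]
  simp only [map_add, map_natCast, map_one]
  push_cast
  ring

theorem coeff_expPartial_succ [CharZero K] {f : K⟦X⟧} (hf : constantCoeff f = 0) (n : ℕ) :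
    (n + 1) * coeff (n + 1) (expPartial f (n + 1)) =
      ∑ i ∈ Finset.range (n + 1),
        (i + 1) * coeff (i + 1) f * coeff (n - i) (expPartial f (n - i)) := by
  have h := congrArg (coeff n) (derivative_expPartial_succ f n)
  rw [coeff_derivative, coeff_mul, Finset.Nat.sum_antidiagonal_eq_sum_range_succ_mk] at h
  rw [mul_comm, h]
  refine Finset.sum_congr rfl fun i _ => ?_
  rw [coeff_derivative, coeff_expPartial_of_le hf (Nat.sub_le n i)]
  ring

end ExpPartial

lemma coeff_xi (c : ℕ → ℝ) (n : ℕ) : coeff n (xi c) = if Odd n then c n else 0 := by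
  simp [xi]

lemma constantCoeff_two_mul_xi (c : ℕ → ℝ) : constantCoeff (C 2 * xi c) = 0 := by
  simp [← coeff_zero_eq_constantCoeff_apply, coeff_xi]

lemma q_eq_coeff_expPartial (c : ℕ → ℝ) (k : ℕ) :
    q c k = coeff k (expPartial (C 2 * xi c) k) := rfl

lemma q_zero (c : ℕ → ℝ) : q c 0 = 1 := by
  simp [q]

lemma q_succ (c : ℕ → ℝ) (n : ℕ) :
    (n + 1) * q c (n + 1) = 2 * ∑ i ∈ Finset.range (n + 1),
      (i + 1) * (if Odd (i + 1) then c (i + 1) else 0) * q c (n - i) := by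
  simp only [q_eq_coeff_expPartial]
  rw [coeff_expPartial_succ (constantCoeff_two_mul_xi c), Finset.mul_sum]
  refine Finset.sum_congr rfl fun i _ => ?_
  rw [coeff_C_mul, coeff_xi]
  ring

lemma q_one (c : ℕ → ℝ) : q c 1 = 2 * c 1 := by
  have h := q_succ c 0
  simp [q_zero] at h
  linarith

lemma q_two (c : ℕ → ℝ) : q c 2 = 2 * c 1 ^ 2 := by
  have h := q_succ c 1
  simp [Finset.sum_range_succ, q_one, Nat.odd_iff] at h
  linarith

lemma q_three (c : ℕ → ℝ) : q c 3 = 4 / 3 * c 1 ^ 3 + 2 * c 3 := by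
  have h := q_succ c 2
  simp [Finset.sum_range_succ, q_zero, q_two, Nat.odd_iff] at h
  linarith

lemma q_four (c : ℕ → ℝ) : q c 4 = 2 / 3 * c 1 ^ 4 + 4 * c 1 * c 3 := by
  have h := q_succ c 3
  simp [Finset.sum_range_succ, q_one, q_three, Nat.odd_iff] at h
  linarith

lemma q_five (c : ℕ → ℝ) : q c 5 = 4 / 15 * c 1 ^ 5 + 4 * c 1 ^ 2 * c 3 + 2 * c 5 := by
  have h := q_succ c 4
  simp [Finset.sum_range_succ, q_zero, q_two, q_four, Nat.odd_iff] at h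
  linarith

theorem pf_four {R : Type*} [CommRing R] (A : Matrix (Fin 4) (Fin 4) R) :
    pf R 4 A = A 0 1 * A 2 3 - A 0 2 * A 1 3 + A 0 3 * A 1 2 := by
  rw [pf, Fin.sum_univ_three]
  simp [pf, Fin.succAbove]
  ring

lemma qq_zero_right (c : ℕ → ℝ) (a : ℕ) : qq c a 0 = q c a := by
  simp [qq, q_zero]

lemma qq_one_right (c : ℕ → ℝ) (a : ℕ) : qq c a 1 = q c a * q c 1 - 2 * q c (a + 1) := by
  rw [qq, Finset.Icc_self, Finset.sum_singleton, Nat.sub_self, q_zero]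
  ring

lemma qq_two_right (c : ℕ → ℝ) (a : ℕ) :
    qq c a 2 = q c a * q c 2 - 2 * q c (a + 1) * q c 1 + 2 * q c (a + 2) := by
  rw [qq, Finset.sum_Icc_succ_top one_le_two, Finset.Icc_self, Finset.sum_singleton,
    Nat.add_one_sub_one, Nat.sub_self, q_zero]
  ring

lemma Q3210_eq (c : ℕ → ℝ) :
    Q3210 c = qq c 3 2 * q c 1 - qq c 3 1 * q c 2 + q c 3 * qq c 2 1 := by
  rw [Q3210, pf_four]
  simp [qq_zero_right]

lemma Q3210_eq_c (c : ℕ → ℝ) :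
    Q3210 c = 8 / 45 * c 1 ^ 6 - 8 / 3 * c 3 * c 1 ^ 3 - 8 * c 3 ^ 2 + 8 * c 1 * c 5 := by
  rw [Q3210_eq, qq_two_right, qq_one_right, qq_one_right]
  simp only [Nat.reduceAdd, q_one, q_two, q_three, q_four, q_five]
  ring

lemma Q3210_cOf (a : Fin 4 → ℝ) : Q3210 (cOf a) =
    8 * ((a 0 + a 1) * (a 0 + a 2) * (a 0 + a 3) * (a 1 + a 2) * (a 1 + a 3) * (a 2 + a 3)) := by
  simp only [Q3210_eq_c, cOf, Fin.sum_univ_four]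
  push_cast
  ring

/-- `Q_{(3,2,1,0)}(c) = q_{32} q_1 - q_{31} q_2 + q_3 q_{21}`; under the substitution
`c_{2k+1} = (a_1^{2k+1} + ⋯ + a_4^{2k+1})/(2k+1)` it factors as
`8 Π_{i<j} (a_i + a_j)`, hence is positive when all `a_i > 0`. -/
theorem Q3210_factorization :
    (∀ c : ℕ → ℝ, Q3210 c = qq c 3 2 * q c 1 - qq c 3 1 * q c 2 + q c 3 * qq c 2 1) ∧
    (∀ a : Fin 4 → ℝ, Q3210 (cOf a) =
      8 * ((a 0 + a 1) * (a 0 + a 2) * (a 0 + a 3) * (a 1 + a 2) * (a 1 + a 3) *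
        (a 2 + a 3))) ∧
    (∀ a : Fin 4 → ℝ, (∀ i, 0 < a i) → 0 < Q3210 (cOf a)) := by
  refine ⟨Q3210_eq, Q3210_cOf, fun a ha => ?_⟩
  have := ha 0; have := ha 1; have := ha 2; have := ha 3
  rw [Q3210_cOf]
  positivity
end
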